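/- Let a, b > 0 and let c₁, c₂ ≥ 0 satisfy c₁ < √(ab) and c₂ < √(ab). Then there exist r_a, r_b > 0 such that a(r_a − r_a⁻¹) = b(r_b − r_b⁻¹) = c₁·√(r_a r_b) − c₂/√(r_a r_b). -/

import Mathlib

/-!
Every real `s` is attained as `a (r - r⁻¹)` by exactly one `r > 0`, namely `r = rootSubInv (s / a)`.
Choosing `r_a, r_b` this way for a common value `s` reduces the problem to a zero of the continuous
function `defect a b c₁ c₂ s = c₁ √(r_a r_b) - c₂ / √(r_a r_b) - s`. For large `s` one has
`√(ab r_a r_b) ≈ s`, so `c₁ < √(ab)` makes the defect negative; since `s ↦ -s` inverts `r_a r_b`,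
`defect a b c₁ c₂ (-s) = -defect a b c₂ c₁ s`, and `c₂ < √(ab)` makes it positive far to the left.
The intermediate value theorem gives the zero.
-/

noncomputable section

namespace StandardFormIII

open Real

/-- The positive root of `r - r⁻¹ = y`: since `r - r⁻¹ = 2 sinh (log r)`, it is `exp (arsinh (y / 2))`. -/
def rootSubInv (y : ℝ) : ℝ := exp (arsinh (y / 2))

lemma rootSubInv_pos (y : ℝ) : 0 < rootSubInv y := exp_pos _

lemma rootSubInv_sub_inv (y : ℝ) : rootSubInv y - (rootSubInv y)⁻¹ = y := by
  have h := sinh_arsinh (y / 2)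
  rw [sinh_eq, exp_neg] at h
  rw [rootSubInv]
  linarith

lemma rootSubInv_neg (y : ℝ) : rootSubInv (-y) = (rootSubInv y)⁻¹ := by
  rw [rootSubInv, rootSubInv, neg_div, arsinh_neg, exp_neg]

lemma rootSubInv_le (hy : 0 ≤ y) : rootSubInv y ≤ y + 1 := by
  have h : √(1 + (y / 2) ^ 2) ≤ y / 2 + 1 :=
    (sqrt_le_left (by positivity)).2 (by nlinarith)
  rw [rootSubInv, exp_arsinh]
  linarith

lemma continuous_rootSubInv : Continuous rootSubInv :=
  continuous_exp.comp (continuous_arsinh.comp (continuous_id.div_const 2))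

lemma mul_rootSubInv_div_sub_inv {a : ℝ} (ha : a ≠ 0) (s : ℝ) :
    a * (rootSubInv (s / a) - (rootSubInv (s / a))⁻¹) = s := by
  rw [rootSubInv_sub_inv, mul_div_cancel₀ _ ha]

lemma mul_rootSubInv_div_le {a s : ℝ} (ha : 0 < a) (hs : 0 ≤ s) :
    a * rootSubInv (s / a) ≤ s + a := by
  calc a * rootSubInv (s / a) ≤ a * (s / a + 1) :=
        mul_le_mul_of_nonneg_left (rootSubInv_le (by positivity)) ha.le
    _ = s + a := by field_simp

/-- The product `r_a r_b` of the squeezing parameters with `a (r_a - r_a⁻¹) = b (r_b - r_b⁻¹) = s`. -/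
def prodRoot (a b s : ℝ) : ℝ := rootSubInv (s / a) * rootSubInv (s / b)

lemma prodRoot_pos (a b s : ℝ) : 0 < prodRoot a b s :=
  mul_pos (rootSubInv_pos _) (rootSubInv_pos _)

lemma prodRoot_neg (a b s : ℝ) : prodRoot a b (-s) = (prodRoot a b s)⁻¹ := by
  rw [prodRoot, prodRoot, neg_div, neg_div, rootSubInv_neg, rootSubInv_neg, mul_inv]

lemma sqrt_mul_sqrt_prodRoot_le {a b s : ℝ} (ha : 0 < a) (hb : 0 < b) (hs : 0 ≤ s) :
    √(a * b) * √(prodRoot a b s) ≤ s + (a + b) / 2 := by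
  have hra := mul_rootSubInv_div_le ha hs
  have hrb := mul_rootSubInv_div_le hb hs
  have hprod : a * b * prodRoot a b s ≤ (s + a) * (s + b) := by
    calc a * b * prodRoot a b s = (a * rootSubInv (s / a)) * (b * rootSubInv (s / b)) := by
          rw [prodRoot]; ring
      _ ≤ (s + a) * (s + b) :=
          mul_le_mul hra hrb (mul_pos hb (rootSubInv_pos _)).le (by positivity)
  rw [← sqrt_mul (by positivity), sqrt_le_left (by positivity)]
  nlinarith [sq_nonneg (a - b)]

def defect (a b c₁ c₂ s : ℝ) : ℝ :=
  c₁ * √(prodRoot a b s) - c₂ / √(prodRoot a b s) - s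

lemma continuous_defect (a b c₁ c₂ : ℝ) : Continuous (defect a b c₁ c₂) := by
  have hP : Continuous fun s => √(prodRoot a b s) :=
    continuous_sqrt.comp <|
      (continuous_rootSubInv.comp (continuous_id.div_const a)).mul
        (continuous_rootSubInv.comp (continuous_id.div_const b))
  exact ((continuous_const.mul hP).sub
    (continuous_const.div hP fun s => (sqrt_pos.2 (prodRoot_pos a b s)).ne')).sub continuous_id

lemma defect_neg (a b c₁ c₂ s : ℝ) : defect a b c₁ c₂ (-s) = -defect a b c₂ c₁ s := by
  rw [defect, defect, prodRoot_neg, sqrt_inv, div_inv_eq_mul]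
  ring

lemma exists_nonneg_defect_nonpos {a b c₁ c₂ : ℝ} (ha : 0 < a) (hb : 0 < b) (hc₁ : 0 ≤ c₁)
    (hc₂ : 0 ≤ c₂) (h₁ : c₁ < √(a * b)) : ∃ s, 0 ≤ s ∧ defect a b c₁ c₂ s ≤ 0 := by
  set t := √(a * b)
  set m := (a + b) / 2
  have ht : 0 < t := sqrt_pos.2 (mul_pos ha hb)
  -- the fixed point of `s ↦ (c₁ / t) (s + m)`
  set s := c₁ * m / (t - c₁)
  have hs : 0 ≤ s := div_nonneg (by positivity) (by linarith)
  have hfix : c₁ * (s + m) = t * s := by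
    simp only [s]
    field_simp [(sub_pos.2 h₁).ne']
    ring
  have hbound : c₁ * √(prodRoot a b s) ≤ s := by
    refine le_of_mul_le_mul_left ?_ ht
    calc t * (c₁ * √(prodRoot a b s)) = c₁ * (t * √(prodRoot a b s)) := by ring
      _ ≤ c₁ * (s + m) := mul_le_mul_of_nonneg_left (sqrt_mul_sqrt_prodRoot_le ha hb hs) hc₁
      _ = t * s := hfix
  have hdiv : 0 ≤ c₂ / √(prodRoot a b s) := by positivity
  exact ⟨s, hs, by rw [defect]; linarith⟩

end StandardFormIII

open StandardFormIII

theorem standard_form_III_exists (a b c₁ c₂ : ℝ)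
    (ha : 0 < a) (hb : 0 < b) (hc₁ : 0 ≤ c₁) (hc₂ : 0 ≤ c₂)
    (h₁ : c₁ < Real.sqrt (a * b)) (h₂ : c₂ < Real.sqrt (a * b)) :
    ∃ ra rb : ℝ, 0 < ra ∧ 0 < rb ∧
      a * (ra - ra⁻¹) = b * (rb - rb⁻¹) ∧
      b * (rb - rb⁻¹) = c₁ * Real.sqrt (ra * rb) - c₂ / Real.sqrt (ra * rb) := by
  obtain ⟨s₁, hs₁, hright⟩ := exists_nonneg_defect_nonpos ha hb hc₁ hc₂ h₁
  obtain ⟨s₂, hs₂, hleft⟩ := exists_nonneg_defect_nonpos ha hb hc₂ hc₁ h₂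
  have hleft' : 0 ≤ defect a b c₁ c₂ (-s₂) := by rw [defect_neg]; linarith
  obtain ⟨s, -, hs⟩ := intermediate_value_Icc' (by linarith : -s₂ ≤ s₁)
    (continuous_defect a b c₁ c₂).continuousOn ⟨hright, hleft'⟩
  refine ⟨rootSubInv (s / a), rootSubInv (s / b), rootSubInv_pos _, rootSubInv_pos _, ?_, ?_⟩
  · rw [mul_rootSubInv_div_sub_inv ha.ne', mul_rootSubInv_div_sub_inv hb.ne']
  · rw [mul_rootSubInv_div_sub_inv hb.ne']
    rw [defect, prodRoot] at hs
    linarith
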